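/- A spinor (e, M, P) ∈ ℂ ⊕ Λ²ℂ⁵ ⊕ ℂ⁵ with e ≠ 0 satisfies the ten equations eP = Pf(M) and MP = 0 if and only if P = Pf(M)/e; in that case MP = 0 holds automatically, i.e., M · Pf(M) = 0 for any skew M. -/
import Mathlib


open Matrix

/-- The vector of signed 4×4 Pfaffians of a 5×5 skew matrix. -/
def pfVec (M : Matrix (Fin 5) (Fin 5) ℂ) : Fin 5 → ℂ :=
  ![M 1 2 * M 3 4 - M 1 3 * M 2 4 + M 1 4 * M 2 3,
    -(M 0 2 * M 3 4) + M 0 3 * M 2 4 - M 0 4 * M 2 3,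
    M 0 1 * M 3 4 - M 0 3 * M 1 4 + M 0 4 * M 1 3,
    -(M 0 1 * M 2 4) + M 0 2 * M 1 4 - M 0 4 * M 1 2,
    M 0 1 * M 2 3 - M 0 2 * M 1 3 + M 0 3 * M 1 2]

lemma pf_mulVec (M : Matrix (Fin 5) (Fin 5) ℂ) (hskew : Mᵀ = -M) :
    M.mulVec (pfVec M) = 0 := by
  have h : ∀ i j, M j i = - M i j := by
    intro i j
    have := congrFun (congrFun hskew i) j
    simpa [Matrix.transpose_apply] using this
  have h0 : ∀ i, M i i = 0 := by
    intro i
    have := h i i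
    linear_combination (this : M i i = -M i i) / 2
  funext i
  fin_cases i <;>
    simp [Matrix.mulVec, dotProduct, pfVec, Fin.sum_univ_five,
      h0, h 0 1, h 0 2, h 0 3, h 0 4, h 1 2, h 1 3, h 1 4, h 2 3, h 2 4, h 3 4] <;>
    ring

/-- A spinor (e, M, P) with e ≠ 0 satisfies the ten equations eP = Pf(M),
MP = 0 if and only if P = Pf(M)/e; and MP = 0 then holds automatically since
M · Pf(M) = 0 for any skew M. -/
theorem spinor_equations_iff (e : ℂ) (he : e ≠ 0)
    (M : Matrix (Fin 5) (Fin 5) ℂ) (hskew : Mᵀ = -M) (P : Fin 5 → ℂ) :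
    ((e • P = pfVec M ∧ M.mulVec P = 0) ↔ P = e⁻¹ • pfVec M) ∧
      M.mulVec (pfVec M) = 0 := by
  have hmv := pf_mulVec M hskew
  refine ⟨⟨fun ⟨h1, _⟩ => ?_, fun h => ?_⟩, hmv⟩
  · rw [← h1, smul_smul, inv_mul_cancel₀ he, one_smul]
  · subst h
    constructor
    · rw [smul_smul, mul_inv_cancel₀ he, one_smul]
    · rw [Matrix.mulVec_smul, hmv, smul_zero]
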